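/- Let G be a simple graph with at least one edge. Then |G| is 3-circle connected if and only if G is a finite cycle, i.e. if and only if |G| is homeomorphic to the circle S¹. -/

import Mathlib

/-!
Every point `x` of a simple closed curve has arbitrarily small connected neighbourhoods in the
curve which `x` cuts into two connected pieces; in particular `x` is never an end of such a
neighbourhood. Inside `|G|` this forces a curve through an interior point of an edge to contain
the whole edge, and a curve through a vertex `u` to contain exactly two of the edges at `u`.

Now let `|G|` be 3-circle connected and let `C` be any simple closed curve in `|G|`. If `u` is a
vertex on `C`, then every edge `uw` at `u` is one of the two edges of `C` at `u`, since a curve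
through the midpoints of these three edges would contain all three of them. Hence `C` is open
in `|G|`. It is also compact, hence closed, and `|G|` is connected because any two of its points
lie on a common curve. So `C = |G|`.
-/

open Topology

noncomputable section

variable {V : Type*}

open Classical in
/-- The Dirac function marking a vertex: the point of `|G|` corresponding to vertex `v`. -/
noncomputable def vertexPoint (v : V) : V → ℝ := fun u => if u = v then 1 else 0

open Classical in
/-- The point of `|G|` lying on the edge `vw` at parameter `t` (measured from `v` towards `w`). -/
noncomputable def edgePoint (v w : V) (t : ℝ) : V → ℝ :=
  fun u => (if u = v then 1 - t else 0) + (if u = w then t else 0)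

/-- The geometric realization `|G|` of a simple graph `G`, realized as the set of
formal convex combinations of adjacent pairs of vertices; each closed edge carries
its usual topology as a copy of `[0,1]`. -/
def GraphRealization (G : SimpleGraph V) : Set (V → ℝ) :=
  {x | (∃ v, x = vertexPoint v) ∨
    ∃ v w t, G.Adj v w ∧ t ∈ Set.Icc (0 : ℝ) 1 ∧ x = edgePoint v w t}

/-- A subset of a topological space is an arc if it is homeomorphic to `[0,1]`. -/
def IsArc {X : Type*} [TopologicalSpace X] (A : Set X) : Prop :=
  Nonempty (↥A ≃ₜ ↥unitInterval)

/-- A space is `n`-arc connected if any at most `n` points lie on a common arc. -/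
def NArcConn (X : Type*) [TopologicalSpace X] (n : ℕ) : Prop :=
  ∀ S : Finset X, S.card ≤ n → ∃ A : Set X, IsArc A ∧ ↑S ⊆ A

/-- The unit circle in the plane. -/
def unitCircleSet : Set (ℝ × ℝ) := {p | p.1 ^ 2 + p.2 ^ 2 = 1}

/-- A subset of a topological space is a simple closed curve if homeomorphic to the circle. -/
def IsSimpleClosedCurve {X : Type*} [TopologicalSpace X] (C : Set X) : Prop :=
  Nonempty (↥C ≃ₜ ↥unitCircleSet)

/-- A space is `n`-circle connected if any at most `n` points lie on a common
simple closed curve. -/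
def NCircleConn (X : Type*) [TopologicalSpace X] (n : ℕ) : Prop :=
  ∀ S : Finset X, S.card ≤ n → ∃ C : Set X, IsSimpleClosedCurve C ∧ ↑S ⊆ C

/-- A space is `n`-strongly arc connected if any list of at most `n` points is contained
in an arc, the points appearing along the arc in the listed order. -/
def NStrongArcConn (X : Type*) [TopologicalSpace X] (n : ℕ) : Prop :=
  ∀ l : List X, l.length ≤ n →
    ∃ f : ↥unitInterval → X, Topology.IsEmbedding f ∧
      ∃ t : Fin l.length → ↥unitInterval, Monotone t ∧ ∀ i, f (t i) = l.get i

/-- A graph is `k`-connected if removing fewer than `k` vertices leaves it connected. -/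
def KConnected (G : SimpleGraph V) (k : ℕ) : Prop :=
  ∀ S : Set V, S.encard < (k : ℕ∞) → (G.induce (Sᶜ : Set V)).Connected

/-- A graph is cyclically connected if any two vertices lie on a common cycle. -/
def CyclicallyConnected (G : SimpleGraph V) : Prop :=
  ∀ v w : V, ∃ (u : V) (c : G.Walk u u), c.IsCycle ∧ v ∈ c.support ∧ w ∈ c.support

/-- The circle of radius `r` centered at `c` in the plane. -/
def circleAt (c : ℝ × ℝ) (r : ℝ) : Set (ℝ × ℝ) :=
  {p | (p.1 - c.1) ^ 2 + (p.2 - c.2) ^ 2 = r ^ 2}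

/-- The horizontal segment at height `y` from abscissa `a` to `b`. -/
def hSeg (y a b : ℝ) : Set (ℝ × ℝ) := {p | p.2 = y ∧ a ≤ p.1 ∧ p.1 ≤ b}

/-- The θ-curve: unit circle together with horizontal diameter. -/
def thetaSet : Set (ℝ × ℝ) := circleAt (0, 0) 1 ∪ hSeg 0 (-1) 1

/-- Figure-eight: two unit circles meeting at the origin. -/
def figureEightSet : Set (ℝ × ℝ) := circleAt (-1, 0) 1 ∪ circleAt (1, 0) 1

/-- Lollipop: unit circle with the segment from `(1,0)` to `(2,0)` attached. -/
def lollipopSet : Set (ℝ × ℝ) := circleAt (0, 0) 1 ∪ hSeg 0 1 2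

/-- Lollipop with its free endpoint removed. -/
def openLollipopSet : Set (ℝ × ℝ) := lollipopSet \ {(2, 0)}

/-- Dumbbell: two disjoint unit circles joined by a segment. -/
def dumbbellSet : Set (ℝ × ℝ) := circleAt (-2, 0) 1 ∪ circleAt (2, 0) 1 ∪ hSeg 0 (-1) 1

/-- Happy-face curve: two circles meeting at a point, joined by a further arc. -/
def happyFaceSet : Set (ℝ × ℝ) :=
  circleAt (-1, 0) 1 ∪ circleAt (1, 0) 1 ∪ {p | p.1 ^ 2 + p.2 ^ 2 = 4 ∧ p.2 ≤ 0}

/-- Baguette curve: two disjoint circles joined by two disjoint arcs. -/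
def baguetteSet : Set (ℝ × ℝ) :=
  circleAt (-3, 0) 1 ∪ circleAt (3, 0) 1 ∪ hSeg 0 (-2) 2 ∪ hSeg 1 (-3) 3

/-- A graph is a basic 4-ac graph iff its realization is homeomorphic to a circle,
a θ-curve, a happy-face curve or a baguette curve (this captures precisely the
subdivisions of those four graphs). -/
def IsBasicFourAC {W : Type*} (H : SimpleGraph W) : Prop :=
  Nonempty (↥(GraphRealization H) ≃ₜ ↥unitCircleSet) ∨
  Nonempty (↥(GraphRealization H) ≃ₜ ↥thetaSet) ∨
  Nonempty (↥(GraphRealization H) ≃ₜ ↥happyFaceSet) ∨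
  Nonempty (↥(GraphRealization H) ≃ₜ ↥baguetteSet)

/-- A chain-graph decomposition of the connected graph `G`: links indexed by an
interval `J` of `ℤ`, non-consecutive links are disjoint, consecutive links share
exactly one vertex. -/
structure IsChainGraph (G : SimpleGraph V) (J : Set ℤ) (L : ℤ → G.Subgraph) : Prop where
  connected : G.Connected
  ordConnected : J.OrdConnected
  nonempty : J.Nonempty
  cover : (⨆ i ∈ J, L i) = (⊤ : G.Subgraph)
  sep : ∀ i ∈ J, ∀ j ∈ J, i + 1 < j → (L i).verts ∩ (L j).verts = ∅
  link : ∀ i ∈ J, i + 1 ∈ J → ∃ v, (L i).verts ∩ (L (i + 1)).verts = {v}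

/-- A cut-vertex: a vertex whose removal disconnects the graph. -/
def IsCutVertex (G : SimpleGraph V) (v : V) : Prop :=
  ¬ (G.induce ({v}ᶜ : Set V)).Connected

/-- A block: a maximal 2-connected subgraph. -/
def IsBlock (G : SimpleGraph V) (H : G.Subgraph) : Prop :=
  KConnected H.coe 2 ∧ ∀ H' : G.Subgraph, H ≤ H' → KConnected H'.coe 2 → H' = H

/-- The block graph of `G`: the bipartite graph on cut-vertices and blocks, a cut-vertex
being adjacent to the blocks containing it. -/
def BlockGraph (G : SimpleGraph V) :
    SimpleGraph ({v : V // IsCutVertex G v} ⊕ {H : G.Subgraph // IsBlock G H}) :=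
  SimpleGraph.fromRel fun a b =>
    ∃ (c : {v : V // IsCutVertex G v}) (B : {H : G.Subgraph // IsBlock G H}),
      a = Sum.inl c ∧ b = Sum.inr B ∧ (c : V) ∈ (B : G.Subgraph).verts

/-- An `A`–`B` path: a path starting in `A`, ending in `B` and meeting `A ∪ B` only
in these two endvertices. -/
structure ABPath (G : SimpleGraph V) (A B : Set V) where
  first : V
  last : V
  walk : G.Walk first last
  isPath : walk.IsPath
  firstA : first ∈ A
  lastB : last ∈ B
  meetA : ∀ v ∈ walk.support, v ∈ A → v = first
  meetB : ∀ v ∈ walk.support, v ∈ B → v = last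

/-- A family of pairwise vertex-disjoint paths. -/
def PathFamilyDisjoint {G : SimpleGraph V} {A B : Set V} {k : ℕ}
    (P : Fin k → ABPath G A B) : Prop :=
  ∀ i j, i ≠ j → ∀ v, v ∈ (P i).walk.support → v ∉ (P j).walk.support

/-- The set of vertices used by a family of paths. -/
def familySupport {G : SimpleGraph V} {A B : Set V} {k : ℕ}
    (P : Fin k → ABPath G A B) : Set V :=
  {v | ∃ i, v ∈ (P i).walk.support}

/-- The set of edges used by a family of paths. -/
def familyEdges {G : SimpleGraph V} {A B : Set V} {k : ℕ}
    (P : Fin k → ABPath G A B) : Set (Sym2 V) :=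
  {e | ∃ i, e ∈ (P i).walk.edges}

/-- A walk `W` (with no repeated edges) is alternating with respect to the disjoint
path family `P`: it starts in `A` off the paths; repeated vertices lie on paths of the
family; upon hitting a path by a new edge it follows that path backwards for at least
one edge; and it traverses edges of paths of the family only backwards. -/
structure IsAlternatingWalk {G : SimpleGraph V} {A B : Set V} {k : ℕ}
    (P : Fin k → ABPath G A B) {x y : V} (W : G.Walk x y) : Prop where
  trail : W.IsTrail
  startA : x ∈ A
  startOff : x ∉ familySupport P
  repeats : ∀ v, List.Duplicate v W.support → v ∈ familySupport P
  follows : ∀ (i : ℕ) (hi : i < W.darts.length) (j : Fin k),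
      (W.darts.get ⟨i, hi⟩).snd ∈ (P j).walk.support →
      (W.darts.get ⟨i, hi⟩).edge ∉ (P j).walk.edges →
      ∃ h : i + 1 < W.darts.length, (W.darts.get ⟨i + 1, h⟩).symm ∈ (P j).walk.darts
  backward : ∀ d ∈ W.darts, ∀ j : Fin k,
      d.edge ∈ (P j).walk.edges → d.symm ∈ (P j).walk.darts

end

open Set

section Curves

variable {X Y : Type*} [TopologicalSpace X] [TopologicalSpace Y]

structure SplitsInTwo (x : X) (N : Set X) : Prop where
  mem : x ∈ N
  isPreconnected : IsPreconnected N
  exists_halves : ∃ A B : Set X, N \ {x} = A ∪ B ∧ A.Nonempty ∧ B.Nonempty ∧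
    IsPreconnected A ∧ IsPreconnected B
  not_isPreconnected_diff : ¬ IsPreconnected (N \ {x})

lemma SplitsInTwo.image {x : X} {N : Set X} (h : SplitsInTwo x N) {f : X → Y}
    (hf : IsEmbedding f) : SplitsInTwo (f x) (f '' N) := by
  obtain ⟨A, B, hAB, hA, hB, hA', hB'⟩ := h.exists_halves
  have hdiff : f '' N \ {f x} = f '' (N \ {x}) := by
    rw [image_sdiff hf.injective, image_singleton]
  refine ⟨mem_image_of_mem f h.mem, h.isPreconnected.image f hf.continuous.continuousOn,
    ⟨f '' A, f '' B, by rw [hdiff, hAB, image_union], hA.image f, hB.image f,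
      hA'.image f hf.continuous.continuousOn, hB'.image f hf.continuous.continuousOn⟩, ?_⟩
  rw [hdiff, hf.isInducing.isPreconnected_image]
  exact h.not_isPreconnected_diff

lemma AddCircle.exists_isOpen_splitsInTwo {p : ℝ} [Fact (0 < p)] (y : AddCircle p)
    {O : Set (AddCircle p)} (hO : O ∈ 𝓝 y) :
    ∃ N, IsOpen N ∧ N ⊆ O ∧ SplitsInTwo y N := by
  obtain ⟨θ, rfl⟩ := QuotientAddGroup.mk_surjective y
  obtain ⟨ε, hε, hεO⟩ := Metric.mem_nhds_iff.1
    ((AddCircle.continuous_mk' p).continuousAt.preimage_mem_nhds hO)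
  -- an interval of length less than `p` around `θ` maps injectively to the circle
  set δ := min ε (p / 2)
  have hδ : 0 < δ := lt_min hε (half_pos Fact.out)
  have hθ : θ ∈ Ioo (θ - δ) (θ + δ) := ⟨by linarith, by linarith⟩
  have hinj : InjOn ((↑) : ℝ → AddCircle p) (Ioo (θ - δ) (θ + δ)) := by
    have hsub : Ioo (θ - δ) (θ + δ) ⊆ Ico (θ - p / 2) (θ - p / 2 + p) := fun a ha =>
      ⟨by linarith [ha.1, min_le_right ε (p / 2)], by linarith [ha.2, min_le_right ε (p / 2)]⟩
    exact fun a ha b hb hab => (AddCircle.coe_eq_coe_iff_of_mem_Ico (hsub ha) (hsub hb)).1 hab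
  have hopen : ∀ a b, IsOpen (((↑) : ℝ → AddCircle p) '' Ioo a b) :=
    fun a b => QuotientAddGroup.isOpenMap_coe _ isOpen_Ioo
  have hdiff : ((↑) '' Ioo (θ - δ) (θ + δ) : Set (AddCircle p)) \ {(θ : AddCircle p)} =
      (↑) '' Ioo (θ - δ) θ ∪ (↑) '' Ioo θ (θ + δ) := by
    have hsplit : Ioo (θ - δ) (θ + δ) \ {θ} = Ioo (θ - δ) θ ∪ Ioo θ (θ + δ) := by
      ext r; simp only [mem_sdiff, mem_Ioo, mem_singleton_iff, mem_union]; grind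
    rw [← image_singleton, ← inter_eq_right.2 (singleton_subset_iff.2 hθ), ← hinj.image_sdiff,
      hsplit, image_union]
  have hmk : Continuous ((↑) : ℝ → AddCircle p) := AddCircle.continuous_mk' p
  refine ⟨_, hopen _ _, ?_, mem_image_of_mem _ hθ,
    isPreconnected_Ioo.image _ hmk.continuousOn,
    ⟨_, _, hdiff, (nonempty_Ioo.2 (by linarith)).image _, (nonempty_Ioo.2 (by linarith)).image _,
      isPreconnected_Ioo.image _ hmk.continuousOn, isPreconnected_Ioo.image _ hmk.continuousOn⟩, ?_⟩
  · rintro _ ⟨r, hr, rfl⟩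
    refine hεO ?_
    rw [Real.ball_eq_Ioo]
    exact ⟨by linarith [hr.1, min_le_left ε (p / 2)], by linarith [hr.2, min_le_left ε (p / 2)]⟩
  · rw [hdiff]
    intro hpre
    obtain ⟨_, -, ⟨a, ha, rfl⟩, ⟨b, hb, hab⟩⟩ := hpre _ _ (hopen _ _) (hopen _ _) subset_rfl
      (by rw [union_inter_cancel_left]; exact (nonempty_Ioo.2 (by linarith)).image _)
      (by rw [union_inter_cancel_right]; exact (nonempty_Ioo.2 (by linarith)).image _)
    have := hinj ⟨hb.1.trans' (by linarith), hb.2⟩ ⟨ha.1, ha.2.trans (by linarith)⟩ hab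
    linarith [ha.2, hb.1]

noncomputable def circleHomeomorphUnitCircleSet : Circle ≃ₜ ↥unitCircleSet :=
  Complex.equivRealProdCLM.toHomeomorph.subtype fun z => by
    simp [unitCircleSet, Submonoid.unitSphere, Complex.norm_def, Complex.normSq_apply, sq]

namespace IsSimpleClosedCurve

variable {C : Set X}

lemma exists_isEmbedding (hC : IsSimpleClosedCurve C) :
    ∃ φ : AddCircle (1 : ℝ) → X, IsEmbedding φ ∧ range φ = C := by
  obtain ⟨e⟩ := hC
  let h : AddCircle (1 : ℝ) ≃ₜ ↥C :=
    ((AddCircle.homeomorphCircle one_ne_zero).trans circleHomeomorphUnitCircleSet).trans e.symm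
  exact ⟨Subtype.val ∘ h, IsEmbedding.subtypeVal.comp h.isEmbedding,
    by rw [range_comp, h.range_coe, image_univ, Subtype.range_coe]⟩

lemma nonempty (hC : IsSimpleClosedCurve C) : C.Nonempty := by
  obtain ⟨φ, -, rfl⟩ := hC.exists_isEmbedding
  exact range_nonempty φ

lemma isCompact (hC : IsSimpleClosedCurve C) : IsCompact C := by
  obtain ⟨φ, hφ, rfl⟩ := hC.exists_isEmbedding
  exact isCompact_range hφ.continuous

lemma isPreconnected (hC : IsSimpleClosedCurve C) : IsPreconnected C := by
  obtain ⟨φ, hφ, rfl⟩ := hC.exists_isEmbedding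
  exact isPreconnected_range hφ.continuous

lemma image (hC : IsSimpleClosedCurve C) {f : X → Y} (hf : IsEmbedding f) :
    IsSimpleClosedCurve (f '' C) := by
  obtain ⟨e⟩ := hC
  have hrange : range (f ∘ Subtype.val : ↥C → Y) = f '' C := by rw [range_comp, Subtype.range_coe]
  exact ⟨(Homeomorph.setCongr hrange).symm.trans
    ((hf.comp IsEmbedding.subtypeVal).toHomeomorph.symm.trans e)⟩

lemma exists_isOpen_splitsInTwo (hC : IsSimpleClosedCurve C) {x : X} (hx : x ∈ C) {O : Set X}
    (hO : IsOpen O) (hxO : x ∈ O) :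
    ∃ U, IsOpen U ∧ U ⊆ O ∧ SplitsInTwo x (C ∩ U) := by
  obtain ⟨φ, hφ, rfl⟩ := hC.exists_isEmbedding
  obtain ⟨y, rfl⟩ := hx
  obtain ⟨N, hN, hNO, hsplit⟩ := AddCircle.exists_isOpen_splitsInTwo y
    (hO.preimage hφ.continuous |>.mem_nhds hxO)
  obtain ⟨U, hU, rfl⟩ := hφ.isInducing.isOpen_iff.1 hN
  refine ⟨U ∩ O, hU.inter hO, inter_subset_right, ?_⟩
  have hφN : range φ ∩ (U ∩ O) = φ '' (φ ⁻¹' U) := by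
    ext z
    constructor
    · rintro ⟨⟨y', rfl⟩, hy', -⟩
      exact ⟨y', hy', rfl⟩
    · rintro ⟨y', hy', rfl⟩
      exact ⟨mem_range_self y', hy', hNO hy'⟩
  rw [hφN]
  exact hsplit.image hφ

end IsSimpleClosedCurve

lemma SplitsInTwo.not_isExtrOn {x : X} {N : Set X} (h : SplitsInTwo x N) {f : X → ℝ}
    {g : ℝ → X} (hf : Continuous f) (hg : Continuous g) (hgf : LeftInvOn g f N) :
    ¬ IsExtrOn f N x := by
  intro hext
  have hoc := (h.isPreconnected.image f hf.continuousOn).ordConnected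
  have hJ : (f '' N \ {f x}).OrdConnected := by
    refine ⟨fun a ⟨⟨y, hy, hya⟩, ha⟩ b ⟨⟨z, hz, hzb⟩, hb⟩ c hc =>
      ⟨hoc.out ⟨y, hy, hya⟩ ⟨z, hz, hzb⟩ hc, ?_⟩⟩
    rintro rfl
    subst hya hzb
    rcases hext with hmin | hmax
    · exact ha (le_antisymm hc.1 (isMinOn_iff.1 hmin y hy))
    · exact hb (le_antisymm (isMaxOn_iff.1 hmax z hz) hc.2)
  apply h.not_isPreconnected_diff
  rw [← (hgf.mono sdiff_subset).image_image, hgf.injOn.image_sdiff,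
    inter_eq_right.2 (singleton_subset_iff.2 h.mem), image_singleton]
  exact hJ.isPreconnected.image g hg.continuousOn

lemma NCircleConn.preconnectedSpace {n : ℕ} (h : NCircleConn X n) (hn : 2 ≤ n) :
    PreconnectedSpace X := by
  classical
  refine ⟨isPreconnected_of_forall_pair fun x _ y _ => ?_⟩
  obtain ⟨C, hC, hxy⟩ := h {x, y} (Finset.card_le_two.trans hn)
  exact ⟨C, subset_univ C, hxy (by simp), hxy (by simp), hC.isPreconnected⟩

lemma NCircleConn.exists_curve_through_three {S : Set X} (h : NCircleConn ↥S 3) {x y z : X}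
    (hx : x ∈ S) (hy : y ∈ S) (hz : z ∈ S) :
    ∃ D ⊆ S, IsSimpleClosedCurve D ∧ x ∈ D ∧ y ∈ D ∧ z ∈ D := by
  classical
  obtain ⟨C, hC, hxyz⟩ := h {⟨x, hx⟩, ⟨y, hy⟩, ⟨z, hz⟩} Finset.card_le_three
  exact ⟨Subtype.val '' C, Subtype.coe_image_subset S C, hC.image IsEmbedding.subtypeVal,
    ⟨⟨x, hx⟩, hxyz (by simp), rfl⟩, ⟨⟨y, hy⟩, hxyz (by simp), rfl⟩, ⟨⟨z, hz⟩, hxyz (by simp), rfl⟩⟩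

end Curves

section Realization

variable {V : Type*} {G : SimpleGraph V} {u v w : V}

lemma vertexPoint_self (v : V) : vertexPoint v v = 1 := by simp [vertexPoint]

lemma vertexPoint_of_ne (h : u ≠ v) : vertexPoint v u = 0 := by simp [vertexPoint, h]

lemma edgePoint_apply_left (h : v ≠ w) (t : ℝ) : edgePoint v w t v = 1 - t := by
  simp [edgePoint, h]

lemma edgePoint_apply_right (h : v ≠ w) (t : ℝ) : edgePoint v w t w = t := by
  simp [edgePoint, h.symm]

lemma edgePoint_apply_of_ne (hv : u ≠ v) (hw : u ≠ w) (t : ℝ) : edgePoint v w t u = 0 := by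
  simp [edgePoint, hv, hw]

lemma eq_or_eq_of_edgePoint_apply_ne_zero {t : ℝ} (h : edgePoint v w t u ≠ 0) : u = v ∨ u = w := by
  by_contra! huvw
  exact h (edgePoint_apply_of_ne huvw.1 huvw.2 t)

lemma edgePoint_swap (v w : V) (t : ℝ) : edgePoint v w t = edgePoint w v (1 - t) := by
  funext u
  by_cases hv : u = v <;> by_cases hw : u = w <;> simp [edgePoint, hv, hw] <;> ring

lemma edgePoint_zero (v w : V) : edgePoint v w 0 = vertexPoint v := by
  funext u
  by_cases hv : u = v <;> simp [edgePoint, vertexPoint, hv]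

lemma edgePoint_one (v w : V) : edgePoint v w 1 = vertexPoint w := by
  rw [edgePoint_swap, sub_self, edgePoint_zero]

lemma continuous_edgePoint (v w : V) : Continuous (edgePoint v w) :=
  continuous_pi fun u => by unfold edgePoint; split_ifs <;> fun_prop

lemma edgePoint_mem_graphRealization (h : G.Adj v w) {t : ℝ} (ht : t ∈ Icc (0 : ℝ) 1) :
    edgePoint v w t ∈ GraphRealization G :=
  Or.inr ⟨v, w, t, h, ht, rfl⟩

lemma eq_vertexPoint_or_eq_edgePoint {x : V → ℝ} (hx : x ∈ GraphRealization G) :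
    (∃ u, x = vertexPoint u) ∨ ∃ v w t, G.Adj v w ∧ t ∈ Ioo (0 : ℝ) 1 ∧ x = edgePoint v w t := by
  rcases hx with ⟨u, rfl⟩ | ⟨v, w, t, hvw, ht, rfl⟩
  · exact Or.inl ⟨u, rfl⟩
  rcases ht.1.eq_or_lt with rfl | ht₀
  · exact Or.inl ⟨v, edgePoint_zero v w⟩
  rcases ht.2.eq_or_lt with rfl | ht₁
  · exact Or.inl ⟨w, edgePoint_one v w⟩
  exact Or.inr ⟨v, w, t, hvw, ⟨ht₀, ht₁⟩, rfl⟩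

/-- On `|G|` this is the open edge `vw`. -/
def edgeNhd (v w : V) : Set (V → ℝ) := {x | x v ∈ Ioo 0 1 ∧ x w ∈ Ioo 0 1}

lemma isOpen_edgeNhd (v w : V) : IsOpen (edgeNhd v w) :=
  (isOpen_Ioo.preimage (continuous_apply v)).inter (isOpen_Ioo.preimage (continuous_apply w))

lemma edgePoint_mem_edgeNhd (h : v ≠ w) {t : ℝ} (ht : t ∈ Ioo (0 : ℝ) 1) :
    edgePoint v w t ∈ edgeNhd v w := by
  refine ⟨?_, ?_⟩
  · rw [edgePoint_apply_left h]
    exact ⟨by linarith [ht.2], by linarith [ht.1]⟩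
  · rwa [edgePoint_apply_right h]

lemma eq_edgePoint_of_mem_edgeNhd {x : V → ℝ} (hx : x ∈ GraphRealization G) (h : v ≠ w)
    (hxvw : x ∈ edgeNhd v w) : x = edgePoint v w (x w) := by
  obtain ⟨hv, hw⟩ := hxvw
  rcases eq_vertexPoint_or_eq_edgePoint hx with ⟨u, rfl⟩ | ⟨a, b, t, hab, -, rfl⟩
  · by_cases hvu : v = u
    · subst hvu; simp [vertexPoint_self] at hv
    · simp [vertexPoint_of_ne hvu] at hv
  rcases eq_or_eq_of_edgePoint_apply_ne_zero hv.1.ne' with rfl | rfl <;>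
    rcases eq_or_eq_of_edgePoint_apply_ne_zero hw.1.ne' with rfl | rfl
  · exact absurd rfl h
  · rw [edgePoint_apply_right hab.ne]
  · rw [edgePoint_apply_left hab.ne, ← edgePoint_swap]
  · exact absurd rfl h

/-- On `|G|` this is the open star of `u`, its edges cut at their midpoints. -/
def vertexNhd (u : V) : Set (V → ℝ) := {x | 1 / 2 < x u}

lemma isOpen_vertexNhd (u : V) : IsOpen (vertexNhd u) :=
  isOpen_lt continuous_const (continuous_apply u)

lemma vertexPoint_mem_vertexNhd (u : V) : vertexPoint u ∈ vertexNhd u := by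
  show (1 : ℝ) / 2 < vertexPoint u u
  rw [vertexPoint_self]; norm_num

lemma exists_adj_eq_edgePoint_of_mem_vertexNhd {x : V → ℝ} (hx : x ∈ GraphRealization G)
    (hxu : x ∈ vertexNhd u) (hne : x ≠ vertexPoint u) :
    ∃ w, G.Adj u w ∧ x w ∈ Ioo (0 : ℝ) (1 / 2) ∧ x = edgePoint u w (x w) := by
  have hxu : 1 / 2 < x u := hxu
  rcases eq_vertexPoint_or_eq_edgePoint hx with ⟨v, rfl⟩ | ⟨a, b, t, hab, ht, rfl⟩
  · by_cases huv : u = v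
    · exact absurd (by rw [huv]) hne
    · rw [vertexPoint_of_ne huv] at hxu
      norm_num at hxu
  rcases eq_or_eq_of_edgePoint_apply_ne_zero (by linarith : edgePoint a b t u ≠ 0) with rfl | rfl
  · rw [edgePoint_apply_left hab.ne] at hxu
    refine ⟨b, hab, ?_, by rw [edgePoint_apply_right hab.ne]⟩
    rw [edgePoint_apply_right hab.ne]
    exact ⟨ht.1, by linarith⟩
  · rw [edgePoint_apply_right hab.ne] at hxu
    refine ⟨a, hab.symm, ?_, by rw [edgePoint_apply_left hab.ne, ← edgePoint_swap]⟩
    rw [edgePoint_apply_left hab.ne]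
    exact ⟨by linarith [ht.2], by linarith⟩

lemma exists_edgePoint_mem_of_isOpen {U : Set (V → ℝ)} (hU : IsOpen U) (hu : vertexPoint u ∈ U)
    (w : V) : ∃ r ∈ Ioo (0 : ℝ) 1, edgePoint u w r ∈ U := by
  have h : edgePoint u w ⁻¹' U ∈ 𝓝[>] (0 : ℝ) := nhdsWithin_le_nhds <|
    (continuous_edgePoint u w).continuousAt.preimage_mem_nhds (by
      rw [edgePoint_zero]; exact hU.mem_nhds hu)
  obtain ⟨r, hrU, hr⟩ := Filter.nonempty_of_mem (Filter.inter_mem h (Ioo_mem_nhdsGT zero_lt_one))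
  exact ⟨r, hr, hrU⟩

lemma IsPreconnected.exists_adj_eq_edgePoint_of_subset_vertexNhd {S : Set (V → ℝ)}
    (hS : IsPreconnected S) (hSne : S.Nonempty) (hSG : S ⊆ GraphRealization G)
    (hSu : S ⊆ vertexNhd u) (hu : vertexPoint u ∉ S) :
    ∃ w, G.Adj u w ∧ ∀ x ∈ S, x w ∈ Ioo (0 : ℝ) (1 / 2) ∧ x = edgePoint u w (x w) := by
  have hstar : ∀ x ∈ S, ∃ w, G.Adj u w ∧ x w ∈ Ioo (0 : ℝ) (1 / 2) ∧
      x = edgePoint u w (x w) ∧ ∀ w', x w' ≠ 0 → w' = u ∨ w' = w := fun x hx => by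
    obtain ⟨w, hw, hxw, hx⟩ :=
      exists_adj_eq_edgePoint_of_mem_vertexNhd (hSG hx) (hSu hx) fun h => hu (h ▸ hx)
    exact ⟨w, hw, hxw, hx, fun w' h =>
      eq_or_eq_of_edgePoint_apply_ne_zero (t := x w) (by rwa [← hx])⟩
  obtain ⟨a, ha⟩ := hSne
  obtain ⟨w₀, hw₀, -, -, ha₀⟩ := hstar a ha
  -- the open star of `u` minus `u` is the disjoint union of the open half-edges at `u`
  set W := ⋃ w ∈ ({u, w₀} : Set V)ᶜ, {x : V → ℝ | 0 < x w}
  have hW : IsOpen W := isOpen_biUnion fun w _ => isOpen_lt continuous_const (continuous_apply w)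
  have hS₀ : S ⊆ {x | 0 < x w₀} := by
    refine ((isPreconnected_iff_subset_of_disjoint.1 hS) _ W
      (isOpen_lt continuous_const (continuous_apply w₀)) hW ?_ ?_).resolve_right fun hSW => ?_
    · intro x hx
      obtain ⟨w, hw, hxw, -⟩ := hstar x hx
      by_cases hww₀ : w = w₀
      · exact Or.inl (hww₀ ▸ hxw.1)
      · exact Or.inr (mem_biUnion (by simp [hw.ne', hww₀]) hxw.1)
    · refine eq_empty_of_forall_notMem fun x ⟨hx, hx₀, hxW⟩ => ?_
      obtain ⟨w, -, -, -, hxw⟩ := hstar x hx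
      obtain ⟨w', hw', hxw'⟩ := mem_iUnion₂.1 hxW
      have hw₀w := (hxw w₀ (ne_of_gt hx₀)).resolve_left hw₀.ne'
      rcases hxw w' (ne_of_gt hxw') with rfl | rfl <;> simp_all
    · obtain ⟨w', hw', haw'⟩ := mem_iUnion₂.1 (hSW ha)
      rcases ha₀ w' (ne_of_gt haw') with rfl | rfl <;> simp at hw'
  refine ⟨w₀, hw₀, fun x hx => ?_⟩
  obtain ⟨w, -, hxw, hx', hxw'⟩ := hstar x hx
  obtain rfl := (hxw' w₀ (hS₀ hx).ne').resolve_left hw₀.ne'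
  exact ⟨hxw, hx'⟩

end Realization

section CurvesInGraph

variable {V : Type*} {G : SimpleGraph V} {D : Set (V → ℝ)} {u v w : V}

lemma preimage_edgePoint_mem_nhds (hD : IsSimpleClosedCurve D) (hDG : D ⊆ GraphRealization G)
    (hvw : v ≠ w) {s : ℝ} (hs : s ∈ Ioo (0 : ℝ) 1) (hsD : edgePoint v w s ∈ D) :
    edgePoint v w ⁻¹' D ∈ 𝓝 s := by
  obtain ⟨U, -, hU, hsplit⟩ := hD.exists_isOpen_splitsInTwo hsD (isOpen_edgeNhd v w)
    (edgePoint_mem_edgeNhd hvw hs)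
  have hinv : LeftInvOn (edgePoint v w) (· w) (D ∩ U) := fun x hx =>
    (eq_edgePoint_of_mem_edgeNhd (hDG hx.1) hvw (hU hx.2)).symm
  set J := (· w) '' (D ∩ U)
  have hJD : J ⊆ edgePoint v w ⁻¹' D := by
    rintro _ ⟨x, hx, rfl⟩
    rw [mem_preimage, hinv hx]
    exact hx.1
  have hsJ : s ∈ J := ⟨_, hsplit.mem, edgePoint_apply_right hvw s⟩
  -- `s` is interior to `J`, since `edgePoint v w s` is not an end of the arc `D ∩ U`
  have hext : ¬ IsExtrOn (· w) (D ∩ U) (edgePoint v w s) :=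
    hsplit.not_isExtrOn (continuous_apply w) (continuous_edgePoint v w) hinv
  obtain ⟨a, ⟨x, hx, rfl⟩, hxs⟩ : ∃ a ∈ J, a < s := by
    by_contra! h
    exact hext (Or.inl (isMinOn_iff.2 fun x hx => by
      simpa [edgePoint_apply_right hvw] using h _ ⟨x, hx, rfl⟩))
  obtain ⟨b, ⟨y, hy, rfl⟩, hsy⟩ : ∃ b ∈ J, s < b := by
    by_contra! h
    exact hext (Or.inr (isMaxOn_iff.2 fun x hx => by
      simpa [edgePoint_apply_right hvw] using h _ ⟨x, hx, rfl⟩))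
  exact Filter.mem_of_superset (Icc_mem_nhds hxs hsy)
    (((hsplit.isPreconnected.image _ (continuous_apply w).continuousOn).ordConnected.out
      ⟨x, hx, rfl⟩ ⟨y, hy, rfl⟩).trans hJD)

lemma mapsTo_edgePoint_Icc (hD : IsSimpleClosedCurve D) (hDG : D ⊆ GraphRealization G)
    (hvw : v ≠ w) {t : ℝ} (ht : t ∈ Ioo (0 : ℝ) 1) (htD : edgePoint v w t ∈ D) :
    MapsTo (edgePoint v w) (Icc 0 1) D := by
  set T := edgePoint v w ⁻¹' D
  have hT : IsClosed T := hD.isCompact.isClosed.preimage (continuous_edgePoint v w)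
  have hIoo : Ioo (0 : ℝ) 1 ⊆ Ioo 0 1 ∩ interior T := by
    refine isPreconnected_Ioo.subset_of_closure_inter_subset (isOpen_Ioo.inter isOpen_interior)
      ⟨t, ht, ht, mem_interior_iff_mem_nhds.2 (preimage_edgePoint_mem_nhds hD hDG hvw ht htD)⟩ ?_
    rintro s ⟨hs, hs'⟩
    have hsT : s ∈ T := closure_minimal (inter_subset_right.trans interior_subset) hT hs
    exact ⟨hs', mem_interior_iff_mem_nhds.2 (preimage_edgePoint_mem_nhds hD hDG hvw hs' hsT)⟩
  intro s hs
  rw [← closure_Ioo zero_ne_one] at hs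
  exact closure_minimal (hIoo.trans (inter_subset_right.trans interior_subset)) hT hs

lemma IsPreconnected.exists_adj_mapsTo_edgePoint (hD : IsSimpleClosedCurve D)
    (hDG : D ⊆ GraphRealization G) {S : Set (V → ℝ)} (hS : IsPreconnected S) (hSne : S.Nonempty)
    (hSD : S ⊆ D) (hSu : S ⊆ vertexNhd u) (hu : vertexPoint u ∉ S) :
    ∃ w, G.Adj u w ∧ MapsTo (edgePoint u w) (Icc 0 1) D ∧
      ∀ x ∈ S, x w ∈ Ioo (0 : ℝ) (1 / 2) ∧ x = edgePoint u w (x w) := by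
  obtain ⟨w, hw, hSw⟩ :=
    hS.exists_adj_eq_edgePoint_of_subset_vertexNhd hSne (hSD.trans hDG) hSu hu
  obtain ⟨a, ha⟩ := hSne
  obtain ⟨haw, ha'⟩ := hSw a ha
  refine ⟨w, hw, mapsTo_edgePoint_Icc hD hDG hw.ne ⟨haw.1, haw.2.trans (by norm_num)⟩ ?_, hSw⟩
  rw [← ha']
  exact hSD ha

lemma exists_two_edges_of_vertexPoint_mem (hD : IsSimpleClosedCurve D)
    (hDG : D ⊆ GraphRealization G) (hu : vertexPoint u ∈ D) :
    ∃ w₁ w₂, w₁ ≠ w₂ ∧ G.Adj u w₁ ∧ G.Adj u w₂ ∧ MapsTo (edgePoint u w₁) (Icc 0 1) D ∧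
      MapsTo (edgePoint u w₂) (Icc 0 1) D ∧
      ∀ w, G.Adj u w → MapsTo (edgePoint u w) (Icc 0 1) D → w = w₁ ∨ w = w₂ := by
  obtain ⟨U, hU, hUu, hsplit⟩ := hD.exists_isOpen_splitsInTwo hu (isOpen_vertexNhd u)
    (vertexPoint_mem_vertexNhd u)
  obtain ⟨A, B, hAB, hAne, hBne, hA, hB⟩ := hsplit.exists_halves
  have hN : ∀ x ∈ D ∩ U, x = vertexPoint u ∨ x ∈ A ∪ B := fun x hx => by
    by_cases h : x = vertexPoint u
    exacts [Or.inl h, Or.inr (hAB ▸ ⟨hx, h⟩)]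
  have hABN : A ∪ B ⊆ (D ∩ U) \ {vertexPoint u} := hAB.symm.subset
  obtain ⟨w₁, hw₁, hD₁, hA₁⟩ := hA.exists_adj_mapsTo_edgePoint hD hDG hAne
    (fun x hx => (hABN (.inl hx)).1.1) (fun x hx => hUu (hABN (.inl hx)).1.2)
    fun h => (hABN (.inl h)).2 rfl
  obtain ⟨w₂, hw₂, hD₂, hB₂⟩ := hB.exists_adj_mapsTo_edgePoint hD hDG hBne
    (fun x hx => (hABN (.inr hx)).1.1) (fun x hx => hUu (hABN (.inr hx)).1.2)
    fun h => (hABN (.inr h)).2 rfl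
  refine ⟨w₁, w₂, ?_, hw₁, hw₂, hD₁, hD₂, fun w hw hDw => ?_⟩
  · -- otherwise `vertexPoint u` would be an end of the arc `D ∩ U`
    rintro rfl
    refine hsplit.not_isExtrOn (f := (· w₁)) (continuous_apply w₁) (continuous_edgePoint u w₁)
      (fun x hx => ?_) (Or.inl (isMinOn_iff.2 fun x hx => ?_))
    · rcases hN x hx with rfl | hx | hx
      · simp [vertexPoint_of_ne hw₁.ne', edgePoint_zero]
      exacts [(hA₁ x hx).2.symm, (hB₂ x hx).2.symm]
    · rw [vertexPoint_of_ne hw₁.ne']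
      rcases hN x hx with rfl | hx | hx
      · rw [vertexPoint_of_ne hw₁.ne']
      exacts [(hA₁ x hx).1.1.le, (hB₂ x hx).1.1.le]
  · obtain ⟨r, hr, hrU⟩ := exists_edgePoint_mem_of_isOpen hU hsplit.mem.2 w
    have hrw : edgePoint u w r w ≠ 0 := by rw [edgePoint_apply_right hw.ne]; exact hr.1.ne'
    have hrAB : edgePoint u w r ∈ A ∪ B := by
      rw [← hAB]
      refine ⟨⟨hDw ⟨hr.1.le, hr.2.le⟩, hrU⟩, fun h => hrw ?_⟩
      rw [mem_singleton_iff.1 h, vertexPoint_of_ne hw.ne']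
    rcases hrAB with hx | hx
    · rw [(hA₁ _ hx).2] at hrw
      exact Or.inl ((eq_or_eq_of_edgePoint_apply_ne_zero hrw).resolve_left hw.ne')
    · rw [(hB₂ _ hx).2] at hrw
      exact Or.inr ((eq_or_eq_of_edgePoint_apply_ne_zero hrw).resolve_left hw.ne')

lemma eq_or_eq_of_mapsTo_edgePoint (hD : IsSimpleClosedCurve D) (hDG : D ⊆ GraphRealization G)
    {w₁ w₂ : V} (h₁₂ : w₁ ≠ w₂) (hw₁ : G.Adj u w₁) (hw₂ : G.Adj u w₂) (hw : G.Adj u w)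
    (hD₁ : MapsTo (edgePoint u w₁) (Icc 0 1) D) (hD₂ : MapsTo (edgePoint u w₂) (Icc 0 1) D)
    (hDw : MapsTo (edgePoint u w) (Icc 0 1) D) : w = w₁ ∨ w = w₂ := by
  have hu : vertexPoint u ∈ D := edgePoint_zero u w₁ ▸ hD₁ (left_mem_Icc.2 zero_le_one)
  obtain ⟨a, b, -, -, -, -, -, hab⟩ := exists_two_edges_of_vertexPoint_mem hD hDG hu
  rcases hab w₁ hw₁ hD₁ with rfl | rfl <;> rcases hab w₂ hw₂ hD₂ with rfl | rfl <;>
    rcases hab w hw hDw with rfl | rfl <;> simp_all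

lemma mem_nhdsWithin_of_edgePoint_mem {C : Set (V → ℝ)} (hC : IsSimpleClosedCurve C)
    (hCG : C ⊆ GraphRealization G) (hvw : v ≠ w) {t : ℝ} (ht : t ∈ Ioo (0 : ℝ) 1)
    (htC : edgePoint v w t ∈ C) : C ∈ 𝓝[GraphRealization G] edgePoint v w t := by
  refine mem_nhdsWithin.2 ⟨edgeNhd v w, isOpen_edgeNhd v w, edgePoint_mem_edgeNhd hvw ht, ?_⟩
  rintro x ⟨hxvw, hxG⟩
  rw [eq_edgePoint_of_mem_edgeNhd hxG hvw hxvw]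
  exact mapsTo_edgePoint_Icc hC hCG hvw ht htC (Ioo_subset_Icc_self hxvw.2)

lemma mem_nhdsWithin_of_vertexPoint_mem (hG : NCircleConn ↥(GraphRealization G) 3)
    {C : Set (V → ℝ)} (hC : IsSimpleClosedCurve C) (hCG : C ⊆ GraphRealization G)
    (hu : vertexPoint u ∈ C) : C ∈ 𝓝[GraphRealization G] vertexPoint u := by
  obtain ⟨w₁, w₂, h₁₂, hw₁, hw₂, hC₁, hC₂, -⟩ := exists_two_edges_of_vertexPoint_mem hC hCG hu
  refine mem_nhdsWithin.2 ⟨vertexNhd u, isOpen_vertexNhd u, vertexPoint_mem_vertexNhd u, ?_⟩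
  rintro x ⟨hxu, hxG⟩
  by_cases hx : x = vertexPoint u
  · rwa [hx]
  obtain ⟨w, hw, hxw, hx⟩ := exists_adj_eq_edgePoint_of_mem_vertexNhd hxG hxu hx
  -- a curve through the midpoints of the edges `uw₁`, `uw₂` and `uw` contains all three edges
  have hmid : ∀ {w'}, G.Adj u w' → edgePoint u w' (1 / 2) ∈ GraphRealization G :=
    fun hw' => edgePoint_mem_graphRealization hw' ⟨by norm_num, by norm_num⟩
  obtain ⟨D, hDG, hD, h₁, h₂, h⟩ := hG.exists_curve_through_three (hmid hw₁) (hmid hw₂) (hmid hw)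
  have hfull : ∀ {w'}, G.Adj u w' → edgePoint u w' (1 / 2) ∈ D →
      MapsTo (edgePoint u w') (Icc 0 1) D :=
    fun hw' h => mapsTo_edgePoint_Icc hD hDG hw'.ne ⟨by norm_num, by norm_num⟩ h
  rw [hx]
  rcases eq_or_eq_of_mapsTo_edgePoint hD hDG h₁₂ hw₁ hw₂ hw (hfull hw₁ h₁) (hfull hw₂ h₂)
    (hfull hw h) with rfl | rfl
  exacts [hC₁ ⟨hxw.1.le, by linarith [hxw.2]⟩, hC₂ ⟨hxw.1.le, by linarith [hxw.2]⟩]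

lemma IsSimpleClosedCurve.mem_nhdsWithin_graphRealization
    (hG : NCircleConn ↥(GraphRealization G) 3) {C : Set (V → ℝ)} (hC : IsSimpleClosedCurve C)
    (hCG : C ⊆ GraphRealization G) {x : V → ℝ} (hx : x ∈ C) : C ∈ 𝓝[GraphRealization G] x := by
  rcases eq_vertexPoint_or_eq_edgePoint (hCG hx) with ⟨u, rfl⟩ | ⟨v, w, t, hvw, ht, rfl⟩
  · exact mem_nhdsWithin_of_vertexPoint_mem hG hC hCG hx
  · exact mem_nhdsWithin_of_edgePoint_mem hC hCG hvw.ne ht hx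

end CurvesInGraph

theorem statement18_general {V : Type*} (G : SimpleGraph V) :
    NCircleConn ↥(GraphRealization G) 3 ↔
      Nonempty (↥(GraphRealization G) ≃ₜ ↥unitCircleSet) := by
  refine ⟨fun hG => ?_, fun ⟨e⟩ S _ => ⟨univ, ⟨(Homeomorph.Set.univ _).trans e⟩, subset_univ _⟩⟩
  have := hG.preconnectedSpace (by norm_num)
  obtain ⟨C, hC, -⟩ := hG ∅ (by simp)
  have hCopen : IsOpen C := isOpen_iff_mem_nhds.2 fun x hx =>
    mem_nhds_subtype_iff_nhdsWithin.2 <|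
      (hC.image IsEmbedding.subtypeVal).mem_nhdsWithin_graphRealization hG
        (Subtype.coe_image_subset _ C) (mem_image_of_mem _ hx)
  have hCuniv : C = univ := IsClopen.eq_univ ⟨hC.isCompact.isClosed, hCopen⟩ hC.nonempty
  obtain ⟨e⟩ := hC
  exact ⟨(Homeomorph.Set.univ _).symm.trans ((Homeomorph.setCongr hCuniv).symm.trans e)⟩

/-- A graph `G` with at least one edge is 3-circle connected iff `|G|` is
homeomorphic to the circle. -/
theorem statement18 {V : Type*} (G : SimpleGraph V) (hE : ∃ v w, G.Adj v w) :
    NCircleConn ↥(GraphRealization G) 3 ↔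
      Nonempty (↥(GraphRealization G) ≃ₜ ↥unitCircleSet) :=
  statement18_general G
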